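/- For a closed bracketing β with n internal left brackets, removing the m-th internal left bracket (counted from the left) together with its matching right bracket yields again a valid bracketing β(m̂); moreover, for m < m', the operations of removing bracket pairs satisfy the simplicial-type commutation relation: removing the m-th then the (m'−1)-th pair equals removing the m'-th then the m-th pair. -/
import Mathlib


/-- Symbols: an input `•`, a left bracket `[`, a right bracket `]`. -/
inductive BSym : Type
  | dot : BSym
  | lb : BSym
  | rb : BSym
deriving DecidableEq

/-- A word is balanced if every prefix has at least as many `[` as `]`
and the total numbers of `[` and `]` agree. -/
def BalancedWord (w : List BSym) : Prop :=
  (∀ p : List BSym, p <+: w → p.count BSym.rb ≤ p.count BSym.lb) ∧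
    w.count BSym.lb = w.count BSym.rb

/-- The recursively defined set of bracketings: `•` is a bracketing; if `β` is a
bracketing not of the form `[α]` for a bracketing `α`, then `[β]` is a bracketing;
a concatenation of two bracketings is a bracketing.
(For a bracketing `β`, being of the form `[α]` with `α` a bracketing is equivalent
to being of the form `[γ]` with `γ` balanced, which is the strictly positive
formulation used here.) -/
inductive Brak : List BSym → Prop
  | dot : Brak [BSym.dot]
  | brkt {β : List BSym} (hβ : Brak β)
      (hne : ¬ ∃ γ : List BSym, BalancedWord γ ∧ β = BSym.lb :: (γ ++ [BSym.rb])) :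
      Brak (BSym.lb :: (β ++ [BSym.rb]))
  | append {α β : List BSym} (hα : Brak α) (hβ : Brak β) : Brak (α ++ β)

/-- Delete the `]` that closes the bracket just opened: `d` counts the number of
currently open inner `[`s. -/
def delMatch : List BSym → ℕ → List BSym
  | [], _ => []
  | BSym.rb :: t, 0 => t
  | BSym.rb :: t, d + 1 => BSym.rb :: delMatch t d
  | BSym.lb :: t, d => BSym.lb :: delMatch t (d + 1)
  | BSym.dot :: t, d => BSym.dot :: delMatch t d

/-- Remove the (0-indexed) `m`-th `[` of a word, counted from the left, together
with its matching `]`.  For a closed bracketing `[γ]`, the outermost `[` has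
index `0`, so the `m`-th internal pair (1-indexed) is removed by `removeNth w m`. -/
def removeNth : List BSym → ℕ → List BSym
  | [], _ => []
  | BSym.lb :: t, 0 => delMatch t 0
  | BSym.lb :: t, m + 1 => BSym.lb :: removeNth t m
  | x :: t, m => x :: removeNth t m

/-- A closed bracketing: a bracketing of the form `[γ]`. -/
def ClosedBrak (w : List BSym) : Prop :=
  Brak w ∧ ∃ γ : List BSym, w = BSym.lb :: (γ ++ [BSym.rb])

/-! ### Auxiliary lemmas -/

section Aux

open BSym

@[simp] lemma removeNth_nil (m : ℕ) : removeNth [] m = [] := rfl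
@[simp] lemma removeNth_dot (t : List BSym) (m : ℕ) :
    removeNth (dot :: t) m = dot :: removeNth t m := rfl
@[simp] lemma removeNth_rb (t : List BSym) (m : ℕ) :
    removeNth (rb :: t) m = rb :: removeNth t m := rfl
@[simp] lemma removeNth_lb_zero (t : List BSym) :
    removeNth (lb :: t) 0 = delMatch t 0 := rfl
@[simp] lemma removeNth_lb_succ (t : List BSym) (m : ℕ) :
    removeNth (lb :: t) (m + 1) = lb :: removeNth t m := rfl

@[simp] lemma delMatch_nil (d : ℕ) : delMatch [] d = [] := rfl
@[simp] lemma delMatch_dot (t : List BSym) (d : ℕ) :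
    delMatch (dot :: t) d = dot :: delMatch t d := rfl
@[simp] lemma delMatch_rb_zero (t : List BSym) :
    delMatch (rb :: t) 0 = t := rfl
@[simp] lemma delMatch_rb_succ (t : List BSym) (d : ℕ) :
    delMatch (rb :: t) (d + 1) = rb :: delMatch t d := rfl
@[simp] lemma delMatch_lb (t : List BSym) (d : ℕ) :
    delMatch (lb :: t) d = lb :: delMatch t (d + 1) := rfl

@[simp] lemma count_lb_cons_dot (l : List BSym) : (dot :: l).count lb = l.count lb := by
  simp [List.count_cons]
@[simp] lemma count_lb_cons_rb (l : List BSym) : (rb :: l).count lb = l.count lb := by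
  simp [List.count_cons]
@[simp] lemma count_lb_cons_lb (l : List BSym) : (lb :: l).count lb = l.count lb + 1 := by
  simp [List.count_cons]
@[simp] lemma count_rb_cons_dot (l : List BSym) : (dot :: l).count rb = l.count rb := by
  simp [List.count_cons]
@[simp] lemma count_rb_cons_lb (l : List BSym) : (lb :: l).count rb = l.count rb := by
  simp [List.count_cons]
@[simp] lemma count_rb_cons_rb (l : List BSym) : (rb :: l).count rb = l.count rb + 1 := by
  simp [List.count_cons]

/-- Commutation of `delMatch` with itself, at shifted depths. -/
lemma delMatch_delMatch (t : List BSym) (b d : ℕ) :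
    delMatch (delMatch t (b + d + 1)) b = delMatch (delMatch t b) (b + d) := by
  induction t generalizing b with
  | nil => simp
  | cons x t ih =>
    cases x with
    | dot => simp [ih b]
    | lb =>
      have := ih (b + 1)
      simp only [delMatch_lb]
      rw [show b + d + 1 + 1 = (b + 1) + d + 1 by omega, this,
        show b + 1 + d = b + d + 1 by omega]
    | rb =>
      cases b with
      | zero => simp
      | succ b =>
        simp only [delMatch_rb_succ, show b + 1 + d = (b + d) + 1 by omega,
          show b + 1 + d + 1 = (b + d + 1) + 1 by omega]
        exact congrArg _ (ih b)

/-- Commutation of `removeNth` with `delMatch`. -/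
lemma removeNth_delMatch (t : List BSym) (d k : ℕ) :
    removeNth (delMatch t d) k = delMatch (removeNth t k) d := by
  induction t generalizing d k with
  | nil => simp
  | cons x t ih =>
    cases x with
    | dot => simp [ih]
    | rb =>
      cases d with
      | zero => simp
      | succ d => simp [ih]
    | lb =>
      cases k with
      | zero =>
        simp only [delMatch_lb, removeNth_lb_zero]
        have := delMatch_delMatch t 0 d
        simpa using this
      | succ k => simp [ih]

/-- The general commutation law for removals: it holds for arbitrary words. -/
lemma removeNth_comm (w : List BSym) (m d : ℕ) :
    removeNth (removeNth w m) (m + d) = removeNth (removeNth w (m + d + 1)) m := by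
  induction w generalizing m with
  | nil => simp
  | cons x t ih =>
    cases x with
    | dot => simp [ih]
    | rb => simp [ih]
    | lb =>
      cases m with
      | zero =>
        simp only [removeNth_lb_zero, Nat.zero_add, removeNth_lb_succ]
        exact removeNth_delMatch t 0 d
      | succ m =>
        simp only [removeNth_lb_succ, show m + 1 + d = (m + d) + 1 by omega,
          show m + 1 + d + 1 = (m + d + 1) + 1 by omega]
        exact congrArg _ (ih m)

/-- `delMatch` passes through a "locally balanced" word. -/
lemma delMatch_passthrough : ∀ (γ : List BSym) (d e : ℕ) (l : List BSym),
    (∀ p s, γ = p ++ rb :: s → p.count rb + 1 ≤ p.count lb + d) →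
    (γ.count rb + e = γ.count lb + d) →
    delMatch (γ ++ l) d = γ ++ delMatch l e := by
  intro γ
  induction γ with
  | nil =>
    intro d e l _ hc
    simp only [List.count_nil] at hc
    simp [show e = d by omega]
  | cons x γ ih =>
    intro d e l hp hc
    cases x with
    | dot =>
      simp only [count_rb_cons_dot, count_lb_cons_dot] at hc
      have hp' : ∀ p s, γ = p ++ rb :: s → p.count rb + 1 ≤ p.count lb + d := by
        intro p s hps
        have := hp (dot :: p) s (by rw [hps]; rfl)
        simp only [count_rb_cons_dot, count_lb_cons_dot] at this
        exact this
      simp only [List.cons_append, delMatch_dot, ih d e l hp' hc]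
    | lb =>
      simp only [count_rb_cons_lb, count_lb_cons_lb] at hc
      have hp' : ∀ p s, γ = p ++ rb :: s → p.count rb + 1 ≤ p.count lb + (d + 1) := by
        intro p s hps
        have := hp (lb :: p) s (by rw [hps]; rfl)
        simp only [count_rb_cons_lb, count_lb_cons_lb] at this
        omega
      simp only [List.cons_append, delMatch_lb, ih (d + 1) e l hp' (by omega)]
    | rb =>
      have hd : 1 ≤ d := by
        have := hp [] γ rfl
        simpa using this
      obtain ⟨d, rfl⟩ : ∃ d', d = d' + 1 := ⟨d - 1, by omega⟩
      simp only [count_rb_cons_rb, count_lb_cons_rb] at hc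
      have hp' : ∀ p s, γ = p ++ rb :: s → p.count rb + 1 ≤ p.count lb + d := by
        intro p s hps
        have := hp (rb :: p) s (by rw [hps]; rfl)
        simp only [count_rb_cons_rb, count_lb_cons_rb] at this
        omega
      simp only [List.cons_append, delMatch_rb_succ, ih d e l hp' (by omega)]

lemma delMatch_balanced_append (γ : List BSym) (l : List BSym)
    (h : BalancedWord γ) : delMatch (γ ++ l) 0 = γ ++ delMatch l 0 := by
  refine delMatch_passthrough γ 0 0 l (fun p s hps => ?_) (by have := h.2; omega)
  · have hpre : p ++ [rb] <+: γ := ⟨s, by rw [hps]; simp⟩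
    have := h.1 _ hpre
    simp [List.count_append, count_lb_cons_dot, count_lb_cons_rb, count_lb_cons_lb, count_rb_cons_dot, count_rb_cons_lb, count_rb_cons_rb] at this
    omega

end Aux

section Aux2

open BSym

/-- If a word has more `]`s than `[`s (plus depth), `delMatch` finishes inside it. -/
lemma delMatch_stays : ∀ (s : List BSym) (d : ℕ) (l : List BSym),
    s.count lb + d + 1 ≤ s.count rb →
    delMatch (s ++ l) d = delMatch s d ++ l := by
  intro s
  induction s with
  | nil => intro d l h; simp at h
  | cons x s ih =>
    intro d l h
    cases x with
    | dot =>
      simp only [count_lb_cons_dot, count_lb_cons_rb, count_lb_cons_lb, count_rb_cons_dot, count_rb_cons_lb, count_rb_cons_rb] at h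
      simp only [List.cons_append, delMatch_dot, List.cons_append]
      rw [ih d l (by omega)]
    | lb =>
      simp only [count_lb_cons_dot, count_lb_cons_rb, count_lb_cons_lb, count_rb_cons_dot, count_rb_cons_lb, count_rb_cons_rb] at h
      simp only [List.cons_append, delMatch_lb, List.cons_append]
      rw [ih (d + 1) l (by omega)]
    | rb =>
      cases d with
      | zero => simp
      | succ d =>
        simp only [count_lb_cons_dot, count_lb_cons_rb, count_lb_cons_lb, count_rb_cons_dot, count_rb_cons_lb, count_rb_cons_rb] at h
        simp only [List.cons_append, delMatch_rb_succ, List.cons_append]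
        rw [ih d l (by omega)]

/-- Every `[` of `s` is matched inside `s`. -/
def Closedish (s : List BSym) : Prop :=
  ∀ a b, s = a ++ lb :: b → b.count lb + 1 ≤ b.count rb

lemma BalancedWord.closedish {s : List BSym} (h : BalancedWord s) : Closedish s := by
  intro a b hab
  have ha : a <+: s := ⟨lb :: b, hab.symm⟩
  have h1 := h.1 a ha
  have h2 := h.2
  rw [hab] at h2
  simp [List.count_append, count_lb_cons_dot, count_lb_cons_rb, count_lb_cons_lb, count_rb_cons_dot, count_rb_cons_lb, count_rb_cons_rb] at h2
  omega

lemma removeNth_append_left : ∀ (β : List BSym) (k : ℕ) (l : List BSym),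
    Closedish β → k + 1 ≤ β.count lb →
    removeNth (β ++ l) k = removeNth β k ++ l := by
  intro β
  induction β with
  | nil => intro k l _ h; simp at h
  | cons x β ih =>
    intro k l hc h
    cases x with
    | dot =>
      simp only [count_lb_cons_dot, count_lb_cons_rb, count_lb_cons_lb, count_rb_cons_dot, count_rb_cons_lb, count_rb_cons_rb] at h
      simp only [List.cons_append, removeNth_dot, List.cons_append]
      rw [ih k l (fun a b hab => hc (dot :: a) b (by rw [hab]; rfl)) (by omega)]
    | rb =>
      simp only [count_lb_cons_dot, count_lb_cons_rb, count_lb_cons_lb, count_rb_cons_dot, count_rb_cons_lb, count_rb_cons_rb] at h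
      simp only [List.cons_append, removeNth_rb, List.cons_append]
      rw [ih k l (fun a b hab => hc (rb :: a) b (by rw [hab]; rfl)) (by omega)]
    | lb =>
      cases k with
      | zero =>
        simp only [List.cons_append, removeNth_lb_zero]
        exact delMatch_stays β 0 l (by simpa using hc [] β rfl)
      | succ k =>
        simp only [count_lb_cons_dot, count_lb_cons_rb, count_lb_cons_lb, count_rb_cons_dot, count_rb_cons_lb, count_rb_cons_rb] at h
        simp only [List.cons_append, removeNth_lb_succ, List.cons_append]
        rw [ih k l (fun a b hab => hc (lb :: a) b (by rw [hab]; rfl)) (by simp at h; omega)]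

lemma removeNth_append_right : ∀ (β : List BSym) (k : ℕ) (l : List BSym),
    β.count lb ≤ k →
    removeNth (β ++ l) k = β ++ removeNth l (k - β.count lb) := by
  intro β
  induction β with
  | nil => intro k l _; simp
  | cons x β ih =>
    intro k l h
    cases x with
    | dot =>
      simp only [count_lb_cons_dot] at h ⊢
      simp only [List.cons_append, removeNth_dot, ih k l h]
    | rb =>
      simp only [count_lb_cons_rb] at h ⊢
      simp only [List.cons_append, removeNth_rb, ih k l h]
    | lb =>
      simp only [count_lb_cons_lb] at h ⊢
      obtain ⟨k, rfl⟩ : ∃ k', k = k' + 1 := ⟨k - 1, by omega⟩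
      simp only [List.cons_append, removeNth_lb_succ, ih k l (by omega)]
      rw [show k + 1 - (β.count lb + 1) = k - β.count lb by omega]

/-- Bracketings are balanced. -/
lemma Brak.balanced {w : List BSym} (h : Brak w) : BalancedWord w := by
  induction h with
  | dot =>
    constructor
    · intro p hp
      match p with
      | [] => simp
      | [a] =>
        obtain ⟨rfl, -⟩ := List.cons_prefix_cons.mp hp
        simp
      | a :: b :: q =>
        have := hp.length_le
        simp at this
    · simp
  | brkt hβ hne ihβ =>
    rename_i β
    constructor
    · intro p hp
      match p, hp with
      | [], _ => simp
      | x :: q, hp =>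
        rw [List.cons_prefix_cons] at hp
        obtain ⟨rfl, hq⟩ := hp
        rcases List.prefix_concat_iff.mp hq with rfl | hq'
        · have := ihβ.2
          simp [count_lb_cons_dot, count_lb_cons_rb, count_lb_cons_lb, count_rb_cons_dot, count_rb_cons_lb, count_rb_cons_rb, List.count_append]
          omega
        · have := ihβ.1 _ hq'
          simp
          omega
    · have := ihβ.2
      simp [count_lb_cons_dot, count_lb_cons_rb, count_lb_cons_lb, count_rb_cons_dot, count_rb_cons_lb, count_rb_cons_rb, List.count_append]
      omega
  | append hα hβ ihα ihβ =>
    rename_i α β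
    constructor
    · intro p hp
      by_cases hl : p.length ≤ α.length
      · have hpα : p <+: α := List.prefix_of_prefix_length_le hp (α.prefix_append β) hl
        exact ihα.1 p hpα
      · have hαp : α <+: p :=
          List.prefix_of_prefix_length_le (α.prefix_append β) hp (by omega)
        obtain ⟨q, rfl⟩ := hαp
        have hq : q <+: β := by
          obtain ⟨t, ht⟩ := hp
          exact ⟨t, by simpa using ht⟩
        have h1 := ihα.2
        have h2 := ihβ.1 q hq
        simp [List.count_append]
        omega
    · have := ihα.2; have := ihβ.2
      simp [List.count_append]
      omega

lemma Brak.ne_nil {w : List BSym} (h : Brak w) : w ≠ [] := by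
  induction h with
  | dot => simp
  | brkt => simp
  | append hα hβ ihα ihβ => simp [ihα]

/-- The concatenation of two nonempty balanced words is not a single closed bracket. -/
lemma not_single_pair_append {x y : List BSym}
    (hx : BalancedWord x) (_hy : BalancedWord y) (hxe : x ≠ []) (hye : y ≠ []) :
    ¬ ∃ γ : List BSym, BalancedWord γ ∧ x ++ y = lb :: (γ ++ [rb]) := by
  rintro ⟨γ, hγ, heq⟩
  match x, hxe with
  | c :: x', _ =>
    have hc : c = lb := by
      have := congrArg (fun l => l.head?) heq
      simpa using this
    subst hc
    have hx'γ : x' <+: γ := by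
      have hxpre : x' <+: γ ++ [rb] := by
        refine ⟨y, ?_⟩
        have := heq
        simpa using this
      refine List.prefix_of_prefix_length_le hxpre (γ.prefix_append [rb]) ?_
      have hlen := congrArg List.length heq
      simp at hlen
      have : y.length ≥ 1 := List.length_pos_iff.mpr hye
      omega
    have h1 := hγ.1 x' hx'γ
    have h2 := hx.2
    simp at h2
    omega

end Aux2

section Main

open BSym

/-- Key lemma: removing any bracket pair from a bracketing yields a bracketing,
and preserves not being a single closed bracket. -/
lemma brak_removeNth {w : List BSym} (hw : Brak w) :
    ∀ k, k < w.count lb →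
      Brak (removeNth w k) ∧
      ((¬ ∃ γ : List BSym, BalancedWord γ ∧ w = lb :: (γ ++ [rb])) →
        ¬ ∃ γ : List BSym, BalancedWord γ ∧ removeNth w k = lb :: (γ ++ [rb])) := by
  induction hw with
  | dot => intro k hk; simp at hk
  | brkt hβ hne ih =>
    rename_i β
    intro k hk
    have hcnt : (lb :: (β ++ [rb])).count lb = β.count lb + 1 := by
      simp [count_lb_cons_dot, count_lb_cons_rb, count_lb_cons_lb, count_rb_cons_dot, count_rb_cons_lb, count_rb_cons_rb, List.count_append]
    constructor
    · cases k with
      | zero =>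
        have : removeNth (lb :: (β ++ [rb])) 0 = β := by
          rw [removeNth_lb_zero, delMatch_balanced_append β [rb] hβ.balanced]
          simp
        rw [this]; exact hβ
      | succ k =>
        have hkβ : k < β.count lb := by rw [hcnt] at hk; omega
        have hstep : removeNth (lb :: (β ++ [rb])) (k + 1)
            = lb :: (removeNth β k ++ [rb]) := by
          rw [removeNth_lb_succ,
            removeNth_append_left β k [rb] hβ.balanced.closedish (by omega)]
        rw [hstep]
        exact Brak.brkt (ih k hkβ).1 ((ih k hkβ).2 hne)
    · intro hnsp
      exact absurd ⟨β, hβ.balanced, rfl⟩ hnsp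
  | append hα hβ ihα ihβ =>
    rename_i α β
    intro k hk
    have hcnt : (α ++ β).count lb = α.count lb + β.count lb := by
      simp [List.count_append]
    by_cases hkα : k < α.count lb
    · have hstep : removeNth (α ++ β) k = removeNth α k ++ β :=
        removeNth_append_left α k β hα.balanced.closedish (by omega)
      rw [hstep]
      refine ⟨Brak.append (ihα k hkα).1 hβ, fun _ => ?_⟩
      exact not_single_pair_append (ihα k hkα).1.balanced hβ.balanced
        (ihα k hkα).1.ne_nil hβ.ne_nil
    · have hstep : removeNth (α ++ β) k = α ++ removeNth β (k - α.count lb) :=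
        removeNth_append_right α k β (by omega)
      have hkβ : k - α.count lb < β.count lb := by rw [hcnt] at hk; omega
      rw [hstep]
      refine ⟨Brak.append hα (ihβ _ hkβ).1, fun _ => ?_⟩
      exact not_single_pair_append hα.balanced (ihβ _ hkβ).1.balanced
        hα.ne_nil (ihβ _ hkβ).1.ne_nil

end Main

/-- for a closed bracketing `β` with `n` internal left brackets,
removing the `m`-th internal bracket pair (1 ≤ m ≤ n) again yields a valid
bracketing `β(m̂)`; moreover, for `m < m'`, removing the `m`-th pair and then the
`(m'−1)`-th equals removing the `m'`-th pair and then the `m`-th. -/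
theorem removeNth_brak_and_comm :
    ∀ w : List BSym, ClosedBrak w → ∀ n : ℕ, w.count BSym.lb = n + 1 →
      (∀ m : ℕ, 1 ≤ m → m ≤ n → Brak (removeNth w m)) ∧
      (∀ m m' : ℕ, 1 ≤ m → m < m' → m' ≤ n →
        removeNth (removeNth w m) (m' - 1) = removeNth (removeNth w m') m) := by
  intro w hw n hn
  constructor
  · intro m _ hmn
    exact (brak_removeNth hw.1 m (by omega)).1
  · intro m m' _ hmm' _
    have := removeNth_comm w m (m' - m - 1)
    rw [show m + (m' - m - 1) + 1 = m' by omega,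
      show m + (m' - m - 1) = m' - 1 by omega] at this
    exact this
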